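/- With the same definitions, f_n(y) → f(y) = (1 + αy/(α+1))^{-1/α} as n → ∞, for every y > 0. -/

import Mathlib

/-!
For `t = y / n`, the values `f_k (k t)` follow the explicit Euler scheme
`x_{k+1} = x_k - c x_k ^ (α + 1)`, `x_0 = 1`, `c = t / (α + 1)`, for the equation
`x' = -x ^ (α + 1) / (α + 1)` solved by `f`. Its exact flow moves `x ^ (-α)` at constant speed,
and one Euler step increases `x ^ (-α)` by at least `α c` and at most `c L(c)` with `L(c) → α`
(from `1 + α s ≤ (1 - s) ^ (-α) ≤ exp (α s / (1 - c))`). After `n` steps `x_n ^ (-α)` is thus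
squeezed to `1 + α n c = 1 + α y / (α + 1)`, so `f_n y = x_n → f y`.
-/

open Real Filter Topology

lemma Real.exp_le_one_add_mul_exp (u : ℝ) : exp u ≤ 1 + u * exp u := by
  have h := mul_le_mul_of_nonneg_right (add_one_le_exp (-u)) (exp_pos u).le
  rw [← exp_add, neg_add_cancel, exp_zero] at h
  linarith

lemma one_add_mul_le_one_sub_rpow_neg {α s : ℝ} (hα : 0 ≤ α) (hs : s < 1) :
    1 + α * s ≤ (1 - s) ^ (-α) := by
  have hlog : log (1 - s) ≤ -s := by linarith [log_le_sub_one_of_pos (sub_pos.2 hs)]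
  calc 1 + α * s ≤ exp (α * s) := by linarith [add_one_le_exp (α * s)]
    _ ≤ (1 - s) ^ (-α) := by
      rw [rpow_def_of_pos (sub_pos.2 hs)]
      exact exp_le_exp.2 (by nlinarith)

lemma one_sub_rpow_neg_le {α s c : ℝ} (hα : 0 ≤ α) (hs : 0 ≤ s) (hsc : s ≤ c) (hc : c < 1) :
    (1 - s) ^ (-α) ≤ 1 + α * exp (α * c / (1 - c)) / (1 - c) * s := by
  have hs1 : 0 < 1 - s := by linarith
  have hc1 : 0 < 1 - c := by linarith
  set u := α * s / (1 - c) with hu_def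
  have hlog : -log (1 - s) ≤ s / (1 - c) :=
    calc -log (1 - s) ≤ s / (1 - s) := by
          have := one_sub_inv_le_log_of_pos hs1
          rw [show 1 - (1 - s)⁻¹ = -(s / (1 - s)) by field_simp; ring] at this
          linarith
      _ ≤ s / (1 - c) := by gcongr
  have hu : u ≤ α * c / (1 - c) := by rw [hu_def]; gcongr
  calc (1 - s) ^ (-α) = exp (α * -log (1 - s)) := by rw [rpow_def_of_pos hs1]; ring_nf
    _ ≤ exp u := exp_le_exp.2 (by
          rw [hu_def, mul_div_assoc]; exact mul_le_mul_of_nonneg_left hlog hα)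
    _ ≤ 1 + u * exp u := exp_le_one_add_mul_exp u
    _ ≤ 1 + u * exp (α * c / (1 - c)) := by gcongr
    _ = 1 + α * exp (α * c / (1 - c)) / (1 - c) * s := by ring

noncomputable def eulerStep (α c x : ℝ) : ℝ := x - c * x ^ (α + 1)

noncomputable def eulerIterate (α c : ℝ) (k : ℕ) : ℝ := (eulerStep α c)^[k] 1

-- A bound for the slope of `t ↦ (1 - t) ^ (-α)` on `[0, c]`; it tends to `α` as `c → 0`.
noncomputable def eulerSlope (α c : ℝ) : ℝ := α * exp (α * c / (1 - c)) / (1 - c)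

section EulerStep

variable {α c x : ℝ}

lemma eulerStep_eq_mul (hx : 0 < x) : eulerStep α c x = x * (1 - c * x ^ α) := by
  rw [eulerStep, rpow_add_one hx.ne']; ring

lemma eulerStep_mem_Ioc (hα : 0 ≤ α) (hc0 : 0 ≤ c) (hc1 : c < 1) (hx : x ∈ Set.Ioc 0 1) :
    eulerStep α c x ∈ Set.Ioc 0 1 := by
  obtain ⟨hx0, hx1⟩ := hx
  have hs0 : 0 ≤ c * x ^ α := mul_nonneg hc0 (rpow_nonneg hx0.le α)
  have hsc : c * x ^ α ≤ c := mul_le_of_le_one_right hc0 (rpow_le_one hx0.le hx1 hα)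
  rw [eulerStep_eq_mul hx0]
  exact ⟨mul_pos hx0 (by linarith), mul_le_one₀ hx1 (by linarith) (by linarith)⟩

lemma rpow_neg_eulerStep_bounds (hα : 0 ≤ α) (hc0 : 0 ≤ c) (hc1 : c < 1)
    (hx : x ∈ Set.Ioc 0 1) :
    x ^ (-α) + α * c ≤ eulerStep α c x ^ (-α) ∧
      eulerStep α c x ^ (-α) ≤ x ^ (-α) + c * eulerSlope α c := by
  obtain ⟨hx0, hx1⟩ := hx
  set s := c * x ^ α
  have hs0 : 0 ≤ s := mul_nonneg hc0 (rpow_nonneg hx0.le α)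
  have hsc : s ≤ c := mul_le_of_le_one_right hc0 (rpow_le_one hx0.le hx1 hα)
  have hxs : x ^ (-α) * s = c := by
    rw [mul_left_comm, ← rpow_add hx0, neg_add_cancel, rpow_zero, mul_one]
  have hstep : eulerStep α c x ^ (-α) = x ^ (-α) * (1 - s) ^ (-α) := by
    rw [eulerStep_eq_mul hx0, mul_rpow hx0.le (by linarith)]
  have hxα : 0 ≤ x ^ (-α) := rpow_nonneg hx0.le _
  rw [hstep]
  constructor
  · calc x ^ (-α) + α * c = x ^ (-α) * (1 + α * s) := by rw [← hxs]; ring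
      _ ≤ _ := mul_le_mul_of_nonneg_left (one_add_mul_le_one_sub_rpow_neg hα (by linarith)) hxα
  · calc _ ≤ x ^ (-α) * (1 + eulerSlope α c * s) :=
          mul_le_mul_of_nonneg_left (one_sub_rpow_neg_le hα hs0 hsc hc1) hxα
      _ = x ^ (-α) + c * eulerSlope α c := by rw [← hxs]; ring

lemma eulerIterate_succ (α c : ℝ) (k : ℕ) :
    eulerIterate α c (k + 1) = eulerStep α c (eulerIterate α c k) :=
  Function.iterate_succ_apply' _ _ _

lemma eulerIterate_mem_Ioc (hα : 0 ≤ α) (hc0 : 0 ≤ c) (hc1 : c < 1) (k : ℕ) :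
    eulerIterate α c k ∈ Set.Ioc 0 1 := by
  induction k with
  | zero => exact ⟨one_pos, le_rfl⟩
  | succ k ih => rw [eulerIterate_succ]; exact eulerStep_mem_Ioc hα hc0 hc1 ih

lemma eulerIterate_rpow_neg_bounds (hα : 0 ≤ α) (hc0 : 0 ≤ c) (hc1 : c < 1) (k : ℕ) :
    1 + k * (α * c) ≤ eulerIterate α c k ^ (-α) ∧
      eulerIterate α c k ^ (-α) ≤ 1 + k * (c * eulerSlope α c) := by
  induction k with
  | zero => simp [eulerIterate]
  | succ k ih =>
    obtain ⟨hlow, hupp⟩ := rpow_neg_eulerStep_bounds hα hc0 hc1 (eulerIterate_mem_Ioc hα hc0 hc1 k)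
    rw [eulerIterate_succ]
    push_cast
    constructor <;> linarith [ih.1, ih.2]

end EulerStep

lemma tendsto_eulerSlope (α : ℝ) : Tendsto (eulerSlope α) (𝓝 0) (𝓝 α) := by
  have : ContinuousAt (eulerSlope α) 0 := by
    unfold eulerSlope; fun_prop (disch := norm_num)
  simpa [eulerSlope] using this.tendsto

section EulerLimit

variable {α b : ℝ}

lemma eventually_eulerIterate_rpow_neg_bounds (hα : 0 ≤ α) (hb : 0 ≤ b) :
    ∀ᶠ n : ℕ in atTop, 1 + α * b ≤ eulerIterate α (b / n) n ^ (-α) ∧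
      eulerIterate α (b / n) n ^ (-α) ≤ 1 + b * eulerSlope α (b / n) := by
  have hc : Tendsto (fun n : ℕ => b / n) atTop (𝓝 0) := tendsto_const_div_atTop_nhds_zero_nat b
  filter_upwards [hc.eventually_lt_const one_pos, eventually_ne_atTop 0] with n hc1 hn
  have hn' : (n : ℝ) ≠ 0 := Nat.cast_ne_zero.2 hn
  have := eulerIterate_rpow_neg_bounds hα (by positivity) hc1 n
  rwa [mul_left_comm, mul_div_cancel₀ _ hn', ← mul_assoc, mul_div_cancel₀ _ hn'] at this

lemma tendsto_eulerIterate_rpow_neg (hα : 0 ≤ α) (hb : 0 ≤ b) :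
    Tendsto (fun n : ℕ => eulerIterate α (b / n) n ^ (-α)) atTop (𝓝 (1 + α * b)) := by
  have hupp : Tendsto (fun n : ℕ => 1 + b * eulerSlope α (b / n)) atTop (𝓝 (1 + α * b)) := by
    have := ((tendsto_eulerSlope α).comp (tendsto_const_div_atTop_nhds_zero_nat b)).const_mul b
    rw [mul_comm α b]
    exact this.const_add 1
  have hbounds := eventually_eulerIterate_rpow_neg_bounds hα hb
  exact tendsto_of_tendsto_of_tendsto_of_le_of_le' tendsto_const_nhds hupp
    (hbounds.mono fun _ h => h.1) (hbounds.mono fun _ h => h.2)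

end EulerLimit

lemma tendsto_eulerIterate {α b : ℝ} (hα : 0 < α) (hb : 0 ≤ b) :
    Tendsto (fun n : ℕ => eulerIterate α (b / n) n) atTop (𝓝 ((1 + α * b) ^ (-(1 / α)))) := by
  have hpos : (0 : ℝ) < 1 + α * b := by positivity
  refine ((tendsto_eulerIterate_rpow_neg hα.le hb).rpow_const (Or.inl hpos.ne')).congr' ?_
  filter_upwards [(tendsto_const_div_atTop_nhds_zero_nat b).eventually_lt_const one_pos]
    with n hc1
  have hE := (eulerIterate_mem_Ioc hα.le (by positivity) hc1 n).1
  rw [← rpow_mul hE.le, neg_mul_neg, mul_one_div_cancel hα.ne', rpow_one]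

lemma eq_eulerIterate_of_rec {α t : ℝ} {fn : ℕ → ℝ → ℝ}
    (hfn1 : ∀ y, fn 1 y = 1 - y / (α + 1))
    (hfnrec : ∀ n : ℕ, 1 ≤ n → ∀ y : ℝ, 0 < y → y ≤ n →
      fn (n + 1) ((1 + 1 / n) * y) = fn n y - (y / ((α + 1) * n)) * (fn n y) ^ (α + 1))
    (ht0 : 0 < t) (ht1 : t ≤ 1) {k : ℕ} (hk : 1 ≤ k) :
    fn k (k * t) = eulerIterate α (t / (α + 1)) k := by
  induction k, hk using Nat.le_induction with
  | base => simp [hfn1, eulerIterate, eulerStep]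
  | succ k hk ih =>
    have hk' : (k : ℝ) ≠ 0 := by positivity
    have hrec := hfnrec k hk (k * t) (by positivity) (mul_le_of_le_one_right k.cast_nonneg ht1)
    rw [show (1 + 1 / (k : ℝ)) * (k * t) = (k + 1 : ℕ) * t by push_cast; field_simp,
      show k * t / ((α + 1) * k) = t / (α + 1) by field_simp, ih] at hrec
    rw [hrec, eulerIterate_succ, eulerStep]

theorem stmt7_general (α : ℝ) (hα : 0 < α) (f : ℝ → ℝ)
    (hf : ∀ y, f y = (1 + α * y / (α + 1)) ^ (-(1 / α)))
    (fn : ℕ → ℝ → ℝ)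
    (hfn1 : ∀ y, fn 1 y = 1 - y / (α + 1))
    (hfnrec : ∀ n : ℕ, 1 ≤ n → ∀ y : ℝ, 0 < y → y ≤ n →
      fn (n + 1) ((1 + 1 / n) * y) = fn n y - (y / ((α + 1) * n)) * (fn n y) ^ (α + 1)) :
    ∀ y : ℝ, 0 < y →
      Filter.Tendsto (fun n : ℕ => fn n y) Filter.atTop (nhds (f y)) := by
  intro y hy
  have hlim := tendsto_eulerIterate hα (div_nonneg hy.le (by linarith : (0 : ℝ) ≤ α + 1))
  rw [hf, mul_div_assoc]
  refine hlim.congr' ?_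
  filter_upwards [tendsto_natCast_atTop_atTop.eventually_ge_atTop y] with n hyn
  have hn : 0 < (n : ℝ) := hy.trans_le hyn
  have := eq_eulerIterate_of_rec hfn1 hfnrec (div_pos hy hn) ((div_le_one hn).2 hyn)
    (Nat.cast_pos.1 hn)
  rw [mul_div_cancel₀ _ hn.ne', div_right_comm] at this
  exact this.symm

theorem stmt7 (α : ℝ) (hα : 0 < α) (f : ℝ → ℝ)
    (hf : ∀ y, f y = (1 + α * y / (α + 1)) ^ (-(1 / α)))
    (fn : ℕ → ℝ → ℝ)
    (hfn1 : ∀ y, fn 1 y = 1 - y / (α + 1))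
    (hfn0 : ∀ n : ℕ, 1 ≤ n → fn n 0 = 1)
    (hfnrec : ∀ n : ℕ, 1 ≤ n → ∀ y : ℝ, 0 < y → y ≤ n →
      fn (n + 1) ((1 + 1 / n) * y) = fn n y - (y / ((α + 1) * n)) * (fn n y) ^ (α + 1)) :
    ∀ y : ℝ, 0 < y →
      Filter.Tendsto (fun n : ℕ => fn n y) Filter.atTop (nhds (f y)) :=
  stmt7_general α hα f hf fn hfn1 hfnrec
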